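/- arXiv:2208.11419 — 2 statements merged into one kernel-verified Lean document; each statement's English description precedes it below -/
import Mathlib

section
/- The homography H(x) := (H'x + e_{n+1})/(e_{n+1}^T x) with H' := Σ_{j=1}^n (a_{n+1} - a_j)^{-1/2} e_j e_j^T maps points of the quadric x^T A x = 1 parametrized by x_0(V) = (√A)^{-1}(2V + (|V|^2-1)e_{n+1})/(|V|^2+1) to points of the quadric x^T Ã x = 1 with parameter Ṽ = iV (up to signs of coordinates): i.e., H(x_0(V)) agrees up to per-coordinate signs with (√Ã)^{-1}(2(iV) + (|iV|^2-1)e_{n+1})/(|iV|^2+1). -/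
/-!
With `d = V ⬝ᵥ V`, both points are explicit: `H(x₀)` has coordinates `sa_{n+1} (d+1)/(d-1)` and
`2 sa_{n+1} V_j / ((d-1) s_j sa_j)`, while `x̃(iV)` has coordinates `(d+1)/((d-1) sat_{n+1})`
and `2i V_j / ((1-d) sat_j)`. The coordinatewise ratios `sa_{n+1} sat_{n+1}` and
`i sa_{n+1} sat_j / (s_j sa_j)` square to `1` because `ã_{n+1} = a_{n+1}⁻¹` and
`ã_j = a_j / (a_{n+1} (a_j - a_{n+1}))`.
-/

open Matrix

section Signs

variable {K : Type*} [Field K]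

theorem sq_mul_eq_one_of_sq_eq_inv {p q b : K} (hb : b ≠ 0) (hp : p ^ 2 = b⁻¹)
    (hq : q ^ 2 = b) : (p * q) ^ 2 = 1 := by
  rw [mul_pow, hp, hq, inv_mul_cancel₀ hb]

theorem sq_mul_mul_div_mul_eq_one {i p q r t b c : K} (hi : i ^ 2 = -1) (hb : b ≠ 0)
    (hc : c ≠ 0) (hbc : b ≠ c) (hp : p ^ 2 = b⁻¹) (hq : q ^ 2 = (b⁻¹ + (c - b)⁻¹)⁻¹)
    (hr : r ^ 2 = b - c) (ht : t ^ 2 = c⁻¹) : (i * p * q / (r * t)) ^ 2 = 1 := by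
  rw [inv_add_inv hb (sub_ne_zero.mpr hbc.symm), add_sub_cancel, inv_div] at hq
  rw [div_pow, mul_pow, mul_pow, mul_pow, hi, hp, hq, hr, ht]
  field_simp [sub_ne_zero.mpr hbc]
  ring

end Signs

theorem stmt12_general (n : ℕ) (a at' sa sat s : Fin (n + 1) → ℂ)
    (ha : ∀ j, a j ≠ 0) (hdist : Function.Injective a)
    (hatlast : at' (Fin.last n) = (a (Fin.last n))⁻¹)
    (hat : ∀ j, j ≠ Fin.last n →
      at' j = (a (Fin.last n))⁻¹ + (a j - a (Fin.last n))⁻¹)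
    -- fixed square roots of the diagonal entries of `A`, `Ã` and of `a_{n+1} - a_j`
    (hsa : ∀ j, sa j ^ 2 = (a j)⁻¹)
    (hsat : ∀ j, sat j ^ 2 = (at' j)⁻¹) (hsat0 : ∀ j, sat j ≠ 0)
    (hs : ∀ j, j ≠ Fin.last n → s j ^ 2 = a (Fin.last n) - a j)
    (V : Fin (n + 1) → ℂ) (hVlast : V (Fin.last n) = 0)
    (hden : V ⬝ᵥ V + 1 ≠ 0) (hden' : 1 - V ⬝ᵥ V ≠ 0)
    (X0 x0 Hx Xt xt : Fin (n + 1) → ℂ)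
    (hX0 : X0 = (V ⬝ᵥ V + 1)⁻¹ •
      ((2 : ℂ) • V + (V ⬝ᵥ V - 1) • (Pi.single (Fin.last n) 1 : Fin (n + 1) → ℂ)))
    (hx0 : x0 = fun j => (sa j)⁻¹ * X0 j)
    -- the homography applied to `x₀`
    (hHx : Hx = (x0 (Fin.last n))⁻¹ •
      ((fun j => if j = Fin.last n then 0 else (s j)⁻¹ * x0 j)
        + (Pi.single (Fin.last n) 1 : Fin (n + 1) → ℂ)))
    -- the tilde parametrization with `Ṽ = iV`, `|Ṽ|² = -|V|²`
    (hXt : Xt = (1 - V ⬝ᵥ V)⁻¹ •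
      ((2 : ℂ) • (Complex.I • V) + (-(V ⬝ᵥ V) - 1) •
        (Pi.single (Fin.last n) 1 : Fin (n + 1) → ℂ)))
    (hxt : xt = fun j => (sat j)⁻¹ * Xt j) :
    ∃ ε : Fin (n + 1) → ℂ, (∀ j, ε j = 1 ∨ ε j = -1) ∧ ∀ j, Hx j = ε j * xt j := by
  subst hX0 hx0 hHx hXt hxt
  set L := Fin.last n
  set d := V ⬝ᵥ V
  have hd : d - 1 ≠ 0 := fun h => hden' (by linear_combination -h)
  refine ⟨fun j => if j = L then sa L * sat L else
    Complex.I * sa L * sat j / (s j * sa j), fun j => ?_, fun j => ?_⟩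
  · rw [← sq_eq_one_iff]
    dsimp only
    split_ifs with hj
    · exact sq_mul_eq_one_of_sq_eq_inv (ha L) (hsa L) (by rw [hsat, hatlast, inv_inv])
    · exact sq_mul_mul_div_mul_eq_one Complex.I_sq (ha L) (ha j) (fun h => hj (hdist h).symm)
        (hsa L) (by rw [hsat, hat j hj]) (hs j hj) (hsa j)
  · have hsatj := hsat0 j
    rcases eq_or_ne j L with rfl | hj
    · simp only [Pi.smul_apply, Pi.add_apply, Pi.single_eq_same, smul_eq_mul, hVlast, ↓reduceIte,
        mul_zero, mul_one, zero_add, _root_.mul_inv_rev]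
      field_simp
      ring
    · simp only [Pi.smul_apply, Pi.add_apply, Pi.single_eq_same, Pi.single_eq_of_ne hj,
        smul_eq_mul, hVlast, hj, ↓reduceIte, mul_zero, mul_one, zero_add, add_zero,
        _root_.mul_inv_rev]
      field_simp
      rw [Complex.I_sq]
      ring

/-- The homography `H(x) := (H'x + e_{n+1})/(e_{n+1}ᵀ x)` with
`H' := Σ_{j=1}^n (a_{n+1} - a_j)^{-1/2} e_j e_jᵀ` maps points of the quadric
`xᵀ A x = 1` parametrized by `x₀(V) = (√A)⁻¹ (2V + (|V|²-1)e_{n+1})/(|V|²+1)` to points of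
the quadric `xᵀ Ã x = 1` with parameter `Ṽ = iV`, up to per-coordinate signs `ε_j = ±1`. -/
theorem stmt12 (n : ℕ) (a at' sa sat s : Fin (n + 1) → ℂ)
    (ha : ∀ j, a j ≠ 0) (hdist : Function.Injective a)
    (hatlast : at' (Fin.last n) = (a (Fin.last n))⁻¹)
    (hat : ∀ j, j ≠ Fin.last n →
      at' j = (a (Fin.last n))⁻¹ + (a j - a (Fin.last n))⁻¹)
    (hat0 : ∀ j, at' j ≠ 0)
    -- fixed square roots of the diagonal entries of `A`, `Ã` and of `a_{n+1} - a_j`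
    (hsa : ∀ j, sa j ^ 2 = (a j)⁻¹) (hsa0 : ∀ j, sa j ≠ 0)
    (hsat : ∀ j, sat j ^ 2 = (at' j)⁻¹) (hsat0 : ∀ j, sat j ≠ 0)
    (hs : ∀ j, j ≠ Fin.last n → s j ^ 2 = a (Fin.last n) - a j)
    (hs0 : ∀ j, j ≠ Fin.last n → s j ≠ 0)
    (V : Fin (n + 1) → ℂ) (hVlast : V (Fin.last n) = 0)
    (hden : V ⬝ᵥ V + 1 ≠ 0) (hden' : 1 - V ⬝ᵥ V ≠ 0)
    (X0 x0 Hx Xt xt : Fin (n + 1) → ℂ)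
    (hX0 : X0 = (V ⬝ᵥ V + 1)⁻¹ •
      ((2 : ℂ) • V + (V ⬝ᵥ V - 1) • (Pi.single (Fin.last n) 1 : Fin (n + 1) → ℂ)))
    (hx0 : x0 = fun j => (sa j)⁻¹ * X0 j)
    (hx0last : x0 (Fin.last n) ≠ 0)
    -- the homography applied to `x₀`
    (hHx : Hx = (x0 (Fin.last n))⁻¹ •
      ((fun j => if j = Fin.last n then 0 else (s j)⁻¹ * x0 j)
        + (Pi.single (Fin.last n) 1 : Fin (n + 1) → ℂ)))
    -- the tilde parametrization with `Ṽ = iV`, `|Ṽ|² = -|V|²`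
    (hXt : Xt = (1 - V ⬝ᵥ V)⁻¹ •
      ((2 : ℂ) • (Complex.I • V) + (-(V ⬝ᵥ V) - 1) •
        (Pi.single (Fin.last n) 1 : Fin (n + 1) → ℂ)))
    (hxt : xt = fun j => (sat j)⁻¹ * Xt j) :
    ∃ ε : Fin (n + 1) → ℂ, (∀ j, ε j = 1 ∨ ε j = -1) ∧ ∀ j, Hx j = ε j * xt j :=
  stmt12_general n a at' sa sat s ha hdist hatlast hat hsa hsat hsat0 hs V hVlast hden hden' X0 x0
    Hx Xt xt hX0 hx0 hHx hXt hxt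
end

section
/- Under the Hazzidakis substitutions Ṽ_i = iV_i, Λ̃_0 = a_{n+1}Λ_0, R̃_1 = R_1, z̃ = -z a_{n+1}^{-2}(1 - z a_{n+1}^{-1})^{-1}, with I_{1,n}√(R̃_{z̃})I_{1,n} = (1 - z a_{n+1}^{-1})^{-1/2} I_{1,n}√(R_z)I_{1,n} and √(1 - z̃ ã_{n+1}^{-1}) = (1 - z a_{n+1}^{-1})^{-1/2}, the second tangency equation -√z R_1 Λ_0 = 2I_{1,n}√(R_z)I_{1,n}V_0 + √(1 - z a_{n+1}^{-1})(|V_0|^2-1)V_1 - V_1(|V_0|^2+1) implies the corresponding tilde equation ±√(z̃) R̃_1 Λ̃_0 = 2I_{1,n}√(R̃_{z̃})I_{1,n}Ṽ_0 + √(1 - z̃ ã_{n+1}^{-1})(|Ṽ_0|^2-1)Ṽ_1 - Ṽ_1(|Ṽ_0|^2+1) for a suitable choice of sign and square root √(z̃) with (√(z̃))^2 = z̃. -/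
open Matrix

/-
Under `Ṽᵢ = iVᵢ` the quantity `|V₀|²` changes sign, which swaps the roles of the two
`V₁`-coefficients `√(1 - z a_{n+1}⁻¹)(|V₀|² - 1)` and `-(|V₀|² + 1)` once `√(1 - z a_{n+1}⁻¹)` is
replaced by its inverse. Hence the right-hand side of the transformed equation is
`i (1 - z a_{n+1}⁻¹)^{-1/2}` times the original one, and the left-hand side matches it for the
square root `√z̃ = i √z a_{n+1}⁻¹ (1 - z a_{n+1}⁻¹)^{-1/2}` and the sign `-1`.
-/

section Tangency

variable {K ι : Type*} [Field K] [Fintype ι]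

/-- Right-hand side of the second tangency equation, with `Q = I_{1,n}√R_z I_{1,n}` and
`q = √(1 - z a_{n+1}⁻¹)`. -/
def tangencyRhs (Q : Matrix ι ι K) (q : K) (V₀ V₁ : ι → K) : ι → K :=
  (2 : K) • (Q *ᵥ V₀) + (q * (V₀ ⬝ᵥ V₀ - 1)) • V₁ - (V₀ ⬝ᵥ V₀ + 1) • V₁

theorem tangencyRhs_hazzidakis {i q : K} (hi : i ^ 2 = -1) (hq : q ≠ 0)
    (Q : Matrix ι ι K) (V₀ V₁ : ι → K) :
    tangencyRhs (q⁻¹ • Q) q⁻¹ (i • V₀) (i • V₁) = (i * q⁻¹) • tangencyRhs Q q V₀ V₁ := by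
  ext j
  simp only [tangencyRhs, Pi.add_apply, Pi.sub_apply, Pi.smul_apply, smul_eq_mul, mulVec_smul,
    smul_mulVec, smul_dotProduct, dotProduct_smul]
  linear_combination (i * (q⁻¹ - 1) * (V₀ ⬝ᵥ V₀) * V₁ j) * hi
    - (i * (V₀ ⬝ᵥ V₀ - 1) * V₁ j) * mul_inv_cancel₀ hq

end Tangency

theorem stmt19_general (n : ℕ) (aN z sz sq : ℂ)
    (haN : aN ≠ 0)
    (hsz : sz ^ 2 = z) (hsq : sq ^ 2 = 1 - z * aN⁻¹) (hsq0 : sq ≠ 0)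
    (Q Qt R1 : Matrix (Fin (n + 1)) (Fin (n + 1)) ℂ)
    -- `Q = I_{1,n}√R_z I_{1,n}` and its Hazzidakis transform
    (hQt : Qt = sq⁻¹ • Q)
    (V0 V1 L0 : Fin (n + 1) → ℂ)
    (heq : -(sz • (R1 *ᵥ L0)) = (2 : ℂ) • (Q *ᵥ V0)
      + (sq * (V0 ⬝ᵥ V0 - 1)) • V1 - (V0 ⬝ᵥ V0 + 1) • V1) :
    ∃ ε szt : ℂ, (ε = 1 ∨ ε = -1) ∧
      szt ^ 2 = -z * aN⁻¹ ^ 2 * (1 - z * aN⁻¹)⁻¹ ∧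
      (ε * szt) • (R1 *ᵥ (aN • L0)) = (2 : ℂ) • (Qt *ᵥ (Complex.I • V0))
        + (sq⁻¹ * ((Complex.I • V0) ⬝ᵥ (Complex.I • V0) - 1)) • (Complex.I • V1)
        - ((Complex.I • V0) ⬝ᵥ (Complex.I • V0) + 1) • (Complex.I • V1) := by
  refine ⟨-1, Complex.I * sz * aN⁻¹ * sq⁻¹, Or.inr rfl, ?_, ?_⟩
  · rw [← hsq, ← hsz]
    linear_combination (sz ^ 2 * aN⁻¹ ^ 2 * (sq ^ 2)⁻¹) * Complex.I_sq
  · subst hQt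
    change _ = tangencyRhs (sq⁻¹ • Q) sq⁻¹ (Complex.I • V0) (Complex.I • V1)
    rw [tangencyRhs_hazzidakis Complex.I_sq hsq0, tangencyRhs, ← heq, mulVec_smul, smul_smul,
      smul_neg, ← neg_smul, smul_smul]
    congr 1
    field_simp

/-- Covariance of the second tangency equation under the Hazzidakis transformation:
with `Ṽᵢ = iVᵢ`, `Λ̃₀ = a_{n+1}Λ₀`, `R̃₁ = R₁`, `z̃ = -z a_{n+1}⁻²(1 - z a_{n+1}⁻¹)⁻¹`,
`I_{1,n}√R̃_{z̃}I_{1,n} = (1 - z a_{n+1}⁻¹)^{-1/2} I_{1,n}√R_z I_{1,n}` and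
`√(1 - z̃ã_{n+1}⁻¹) = (1 - z a_{n+1}⁻¹)^{-1/2}`, the equation
`-√z R₁Λ₀ = 2I_{1,n}√R_z I_{1,n}V₀ + √(1-za_{n+1}⁻¹)(|V₀|²-1)V₁ - V₁(|V₀|²+1)`
implies the corresponding tilde equation for a suitable sign and square root of `z̃`. -/
theorem stmt19 (n : ℕ) (aN z sz sq : ℂ)
    (haN : aN ≠ 0) (hz : z ≠ aN) (hz' : z * aN⁻¹ ≠ 1)
    (hsz : sz ^ 2 = z) (hsq : sq ^ 2 = 1 - z * aN⁻¹) (hsq0 : sq ≠ 0)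
    (Q Qt R1 : Matrix (Fin (n + 1)) (Fin (n + 1)) ℂ)
    -- `Q = I_{1,n}√R_z I_{1,n}` and its Hazzidakis transform
    (hQt : Qt = sq⁻¹ • Q)
    (hR1 : ∀ j, R1 j (Fin.last n) = 0 ∧ R1 (Fin.last n) j = 0)
    (V0 V1 L0 : Fin (n + 1) → ℂ)
    (hV0last : V0 (Fin.last n) = 0) (hV1last : V1 (Fin.last n) = 0)
    (hL0last : L0 (Fin.last n) = 0)
    (heq : -(sz • (R1 *ᵥ L0)) = (2 : ℂ) • (Q *ᵥ V0)
      + (sq * (V0 ⬝ᵥ V0 - 1)) • V1 - (V0 ⬝ᵥ V0 + 1) • V1) :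
    ∃ ε szt : ℂ, (ε = 1 ∨ ε = -1) ∧
      szt ^ 2 = -z * aN⁻¹ ^ 2 * (1 - z * aN⁻¹)⁻¹ ∧
      (ε * szt) • (R1 *ᵥ (aN • L0)) = (2 : ℂ) • (Qt *ᵥ (Complex.I • V0))
        + (sq⁻¹ * ((Complex.I • V0) ⬝ᵥ (Complex.I • V0) - 1)) • (Complex.I • V1)
        - ((Complex.I • V0) ⬝ᵥ (Complex.I • V0) + 1) • (Complex.I • V1) :=
  stmt19_general n aN z sz sq haN hsz hsq hsq0 Q Qt R1 hQt V0 V1 L0 heq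
end
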